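/- (Rusten–Winther) Let W = [[A, B], [Bᵀ, O]] be the (m+n)×(m+n) real symmetric block matrix where A ∈ ℝ^{m×m} is symmetric positive definite with eigenvalues λ_1(A) ≥ ... ≥ λ_m(A) > 0, B ∈ ℝ^{m×n} has full column rank with singular values σ_1(B) ≥ ... ≥ σ_n(B) > 0, and O is the n×n zero matrix. Then every eigenvalue of W lies in the union of the two intervals [½(λ_m(A) − √(λ_m(A)² + 4σ_1(B)²)), ½(λ_1(A) − √(λ_1(A)² + 4σ_n(B)²))] and [λ_m(A), ½(λ_1(A) + √(λ_1(A)² + 4σ_1(B)²))]. -/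

import Mathlib

/-!
Let `(x, y)` be an eigenvector of `W` with eigenvalue `μ`, so `A x + B y = μ x` and
`Bᵀ x = μ y`. Pairing the first equation with `x` gives `⟨x, A x⟩ = μ (‖x‖² - ‖y‖²)`.
Injectivity of `B` forces `x ≠ 0`, and then positive definiteness of `A` forces `μ ≠ 0`.
The Rayleigh bounds `λ_m ‖x‖² ≤ ⟨x, A x⟩ ≤ λ_1 ‖x‖²` and `σ_n ‖v‖ ≤ ‖B v‖ ≤ σ_1 ‖v‖`
(hence `‖Bᵀ x‖ ≤ σ_1 ‖x‖`) then give `λ_m ≤ μ` and `μ² ≤ λ_1 μ + σ_1²` when `μ > 0`,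
and `μ² ≤ λ_m μ + σ_1²` and `σ_n² ≤ μ² - λ_1 μ` when `μ < 0`. Each of these quadratic
inequalities puts `μ` on one side of a root of `t² - λ t - σ²`.
-/
open Matrix

/-- A real matrix is negative semidefinite if it is symmetric (Hermitian) and its
quadratic form is nonpositive. -/
def Matrix.NegSemidefinite {k : Type*} [Fintype k] (M : Matrix k k ℝ) : Prop :=
  M.IsHermitian ∧ ∀ x : k → ℝ, x ⬝ᵥ (M *ᵥ x) ≤ 0

/-- The maximum eigenvalue of a real symmetric matrix. -/
noncomputable def maxEig {k : Type*} [Fintype k] [DecidableEq k]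
    {M : Matrix k k ℝ} (hM : M.IsHermitian) : ℝ :=
  ⨆ i, hM.eigenvalues i

/-- The minimum eigenvalue of a real symmetric matrix. -/
noncomputable def minEig {k : Type*} [Fintype k] [DecidableEq k]
    {M : Matrix k k ℝ} (hM : M.IsHermitian) : ℝ :=
  ⨅ i, hM.eigenvalues i

/-- The spectral radius of a real symmetric matrix: the maximum of the absolute
values of its eigenvalues. -/
noncomputable def specRad {k : Type*} [Fintype k] [DecidableEq k]
    {M : Matrix k k ℝ} (hM : M.IsHermitian) : ℝ :=
  ⨆ i, |hM.eigenvalues i|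

/-- The largest singular value of a real matrix `B`, given a proof that `Bᵀ * B`
is Hermitian: the square root of the largest eigenvalue of `Bᵀ * B`. -/
noncomputable def sigma1 {m n : ℕ} {B : Matrix (Fin m) (Fin n) ℝ}
    (h : (Bᵀ * B).IsHermitian) : ℝ :=
  Real.sqrt (⨆ k, h.eigenvalues k)

/-- The smallest singular value of a real matrix `B`, given a proof that `Bᵀ * B`
is Hermitian: the square root of the smallest eigenvalue of `Bᵀ * B`. -/
noncomputable def sigmaN {m n : ℕ} {B : Matrix (Fin m) (Fin n) ℝ}
    (h : (Bᵀ * B).IsHermitian) : ℝ :=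
  Real.sqrt (⨅ k, h.eigenvalues k)

section Rayleigh

open scoped Matrix.Norms.L2Operator MatrixOrder

variable {k : Type*} [Fintype k] [DecidableEq k] {M : Matrix k k ℝ}

theorem Matrix.IsHermitian.minEig_mul_le_dotProduct_mulVec (hM : M.IsHermitian) (x : k → ℝ) :
    minEig hM * (x ⬝ᵥ x) ≤ x ⬝ᵥ (M *ᵥ x) := by
  have hle : algebraMap ℝ (Matrix k k ℝ) (minEig hM) ≤ M := by
    rw [algebraMap_le_iff_le_spectrum (ha := hM.isSelfAdjoint),
      hM.spectrum_real_eq_range_eigenvalues]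
    rintro _ ⟨i, rfl⟩
    exact ciInf_le (Set.finite_range _).bddBelow i
  simpa [Algebra.algebraMap_eq_smul_one, sub_mulVec, smul_mulVec] using
    (Matrix.le_iff.mp hle).dotProduct_mulVec_nonneg x

theorem Matrix.IsHermitian.dotProduct_mulVec_le_maxEig_mul (hM : M.IsHermitian) (x : k → ℝ) :
    x ⬝ᵥ (M *ᵥ x) ≤ maxEig hM * (x ⬝ᵥ x) := by
  have hle : M ≤ algebraMap ℝ (Matrix k k ℝ) (maxEig hM) := by
    rw [le_algebraMap_iff_spectrum_le (ha := hM.isSelfAdjoint),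
      hM.spectrum_real_eq_range_eigenvalues]
    rintro _ ⟨i, rfl⟩
    exact le_ciSup (Set.finite_range _).bddAbove i
  simpa [Algebra.algebraMap_eq_smul_one, sub_mulVec, smul_mulVec] using
    (Matrix.le_iff.mp hle).dotProduct_mulVec_nonneg x

end Rayleigh

theorem dotProduct_transpose_mul_self_mulVec {m n : Type*} [Fintype m] [Fintype n]
    (B : Matrix m n ℝ) (v : n → ℝ) : v ⬝ᵥ ((Bᵀ * B) *ᵥ v) = B *ᵥ v ⬝ᵥ B *ᵥ v := by
  rw [← mulVec_mulVec, dotProduct_mulVec, vecMul_transpose]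

theorem eigenvalues_transpose_mul_self_nonneg {m n : Type*} [Fintype m]
    [Fintype n] [DecidableEq n] {B : Matrix m n ℝ} (h : (Bᵀ * B).IsHermitian) (i : n) :
    0 ≤ h.eigenvalues i :=
  eigenvalues_conjTranspose_mul_self_nonneg B i

section SingularValues

variable {m n : ℕ} {B : Matrix (Fin m) (Fin n) ℝ}

theorem dotProduct_mulVec_le_sigma1_sq_mul (h : (Bᵀ * B).IsHermitian) (v : Fin n → ℝ) :
    B *ᵥ v ⬝ᵥ B *ᵥ v ≤ sigma1 h ^ 2 * (v ⬝ᵥ v) := by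
  rw [sigma1, Real.sq_sqrt (Real.iSup_nonneg (eigenvalues_transpose_mul_self_nonneg h)),
    ← dotProduct_transpose_mul_self_mulVec]
  exact h.dotProduct_mulVec_le_maxEig_mul v

theorem sigmaN_sq_mul_le_dotProduct_mulVec (h : (Bᵀ * B).IsHermitian) (v : Fin n → ℝ) :
    sigmaN h ^ 2 * (v ⬝ᵥ v) ≤ B *ᵥ v ⬝ᵥ B *ᵥ v := by
  rw [sigmaN, Real.sq_sqrt (Real.iInf_nonneg (eigenvalues_transpose_mul_self_nonneg h)),
    ← dotProduct_transpose_mul_self_mulVec]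
  exact h.minEig_mul_le_dotProduct_mulVec v

end SingularValues

section CauchySchwarz

variable {k l : Type*} [Fintype k] [Fintype l]

theorem Matrix.IsHermitian.dotProduct_mulVec_comm {M : Matrix k k ℝ} (hM : M.IsHermitian)
    (u v : k → ℝ) : u ⬝ᵥ (M *ᵥ v) = v ⬝ᵥ (M *ᵥ u) := by
  have hMt : Mᵀ = M := by simpa [conjTranspose_eq_transpose_of_trivial] using hM.eq
  rw [dotProduct_mulVec, ← mulVec_transpose, hMt, dotProduct_comm]

theorem dotProduct_sq_le_dotProduct_self_mul (u v : k → ℝ) :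
    (u ⬝ᵥ v) ^ 2 ≤ (u ⬝ᵥ u) * (v ⬝ᵥ v) := by
  simpa only [dotProduct, sq] using Finset.sum_mul_sq_le_sq_mul_sq Finset.univ u v

theorem Matrix.PosSemidef.dotProduct_mulVec_sq_le {M : Matrix k k ℝ} (hM : M.PosSemidef)
    (u v : k → ℝ) : (u ⬝ᵥ (M *ᵥ v)) ^ 2 ≤ (u ⬝ᵥ (M *ᵥ u)) * (v ⬝ᵥ (M *ᵥ v)) := by
  have hquad : ∀ t : ℝ, 0 ≤ (v ⬝ᵥ (M *ᵥ v)) * (t * t) + 2 * (u ⬝ᵥ (M *ᵥ v)) * t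
      + u ⬝ᵥ (M *ᵥ u) := fun t => by
    have h := hM.dotProduct_mulVec_nonneg (u + t • v)
    simp only [star_trivial, mulVec_add, mulVec_smul, dotProduct_add, add_dotProduct,
      dotProduct_smul, smul_dotProduct, smul_eq_mul, hM.isHermitian.dotProduct_mulVec_comm v u]
      at h
    linarith
  have := discrim_le_zero hquad
  rw [discrim] at this
  linarith

/-- `‖Bᵀx‖⁴ = (x ⬝ᵥ B (Bᵀx))² ≤ ‖x‖² ‖B (Bᵀx)‖² ≤ c ‖x‖² ‖Bᵀx‖²`. -/
theorem dotProduct_transpose_mulVec_le {B : Matrix k l ℝ} {c : ℝ} (hc : 0 ≤ c)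
    (hB : ∀ v, B *ᵥ v ⬝ᵥ B *ᵥ v ≤ c * (v ⬝ᵥ v)) (x : k → ℝ) :
    Bᵀ *ᵥ x ⬝ᵥ Bᵀ *ᵥ x ≤ c * (x ⬝ᵥ x) := by
  set w := Bᵀ *ᵥ x
  have hw : x ⬝ᵥ (B *ᵥ w) = w ⬝ᵥ w := by rw [dotProduct_mulVec, ← mulVec_transpose]
  have hx : 0 ≤ x ⬝ᵥ x := dotProduct_self_star_nonneg x
  have hcs : (w ⬝ᵥ w) ^ 2 ≤ (x ⬝ᵥ x) * (c * (w ⬝ᵥ w)) := by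
    rw [← hw]
    exact (dotProduct_sq_le_dotProduct_self_mul x _).trans
      (mul_le_mul_of_nonneg_left (hw ▸ hB w) hx)
  nlinarith [mul_nonneg hc hx]

theorem Matrix.PosSemidef.mulVec_dotProduct_mulVec_le {M : Matrix k k ℝ} (hM : M.PosSemidef)
    {c : ℝ} (hc : 0 ≤ c) (hMc : ∀ v, v ⬝ᵥ (M *ᵥ v) ≤ c * (v ⬝ᵥ v)) (x : k → ℝ) :
    M *ᵥ x ⬝ᵥ M *ᵥ x ≤ c * (x ⬝ᵥ (M *ᵥ x)) := by
  set w := M *ᵥ x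
  have hw : x ⬝ᵥ (M *ᵥ w) = w ⬝ᵥ w := hM.isHermitian.dotProduct_mulVec_comm x w
  have hx : 0 ≤ x ⬝ᵥ (M *ᵥ x) := by simpa using hM.dotProduct_mulVec_nonneg x
  have hcs : (w ⬝ᵥ w) ^ 2 ≤ (x ⬝ᵥ (M *ᵥ x)) * (c * (w ⬝ᵥ w)) := by
    rw [← hw]
    exact (hM.dotProduct_mulVec_sq_le x w).trans (mul_le_mul_of_nonneg_left (hw ▸ hMc w) hx)
  nlinarith [mul_nonneg hc hx]

end CauchySchwarz

theorem mem_Icc_of_sq_le_mul_add {b c x : ℝ} (h : x ^ 2 ≤ b * x + c) :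
    x ∈ Set.Icc ((b - √(b ^ 2 + 4 * c)) / 2) ((b + √(b ^ 2 + 4 * c)) / 2) := by
  have := abs_le.mp (Real.abs_le_sqrt (show (2 * x - b) ^ 2 ≤ b ^ 2 + 4 * c by nlinarith))
  constructor <;> linarith [this.1, this.2]

theorem le_of_le_sq_sub_mul {b c x : ℝ} (h : c ≤ x ^ 2 - b * x) (hx : 2 * x ≤ b) :
    x ≤ (b - √(b ^ 2 + 4 * c)) / 2 := by
  have : √(b ^ 2 + 4 * c) ≤ b - 2 * x := Real.sqrt_le_iff.mpr ⟨by linarith, by nlinarith⟩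
  linarith

section SaddlePoint

variable {m n : Type*} [Fintype m] [Fintype n] {A : Matrix m m ℝ} {B : Matrix m n ℝ}
  {μ : ℝ} {x : m → ℝ} {y : n → ℝ}

theorem dotProduct_mulVec_eq_of_saddlePoint (hx : A *ᵥ x + B *ᵥ y = μ • x)
    (hy : Bᵀ *ᵥ x = μ • y) : x ⬝ᵥ (A *ᵥ x) = μ * (x ⬝ᵥ x) - μ * (y ⬝ᵥ y) := by
  have hBy : x ⬝ᵥ (B *ᵥ y) = μ * (y ⬝ᵥ y) := by
    rw [dotProduct_mulVec, ← mulVec_transpose, hy, smul_dotProduct, smul_eq_mul]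
  have := congrArg (x ⬝ᵥ ·) hx
  simp only [dotProduct_add, dotProduct_smul, smul_eq_mul, hBy] at this
  linarith

theorem ne_zero_of_saddlePoint (hB : Function.Injective B.mulVec) (hxy : x ≠ 0 ∨ y ≠ 0)
    (hx : A *ᵥ x + B *ᵥ y = μ • x) : x ≠ 0 := by
  rintro rfl
  have hBy : B *ᵥ y = B *ᵥ 0 := by simpa using hx
  exact hxy.resolve_left (not_not.mpr rfl) (hB hBy)

theorem eigenvalue_ne_zero_of_saddlePoint (hA : A.PosDef) (hx0 : x ≠ 0)
    (hx : A *ᵥ x + B *ᵥ y = μ • x) (hy : Bᵀ *ᵥ x = μ • y) : μ ≠ 0 := by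
  rintro rfl
  have := hA.dotProduct_mulVec_pos hx0
  simp [dotProduct_mulVec_eq_of_saddlePoint hx hy] at this

/-- Pairing the first equation with `μ x` and using `Bᵀ x = μ y` gives
`μ² ‖x‖² = μ ⟨x, A x⟩ + ‖Bᵀ x‖²`; the upper bound `‖Bᵀ x‖ ≤ s ‖x‖` turns this into a
quadratic inequality for `μ`. -/
theorem sq_le_of_saddlePoint {l s : ℝ} (hx0 : x ≠ 0)
    (hB : ∀ v, B *ᵥ v ⬝ᵥ B *ᵥ v ≤ s ^ 2 * (v ⬝ᵥ v))
    (hAx : μ * (x ⬝ᵥ (A *ᵥ x)) ≤ μ * (l * (x ⬝ᵥ x)))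
    (hx : A *ᵥ x + B *ᵥ y = μ • x) (hy : Bᵀ *ᵥ x = μ • y) : μ ^ 2 ≤ l * μ + s ^ 2 := by
  have hp : 0 < x ⬝ᵥ x := dotProduct_self_star_pos_iff.mpr hx0
  have hBt := dotProduct_transpose_mulVec_le (sq_nonneg s) hB x
  have hBtx : Bᵀ *ᵥ x ⬝ᵥ Bᵀ *ᵥ x = μ ^ 2 * (y ⬝ᵥ y) := by
    rw [hy, smul_dotProduct, dotProduct_smul, smul_eq_mul, smul_eq_mul]; ring
  rw [dotProduct_mulVec_eq_of_saddlePoint hx hy] at hAx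
  refine le_of_mul_le_mul_right ?_ hp
  linarith

theorem minEig_le_of_saddlePoint [DecidableEq m] (hA : A.IsHermitian) (hμ : 0 < μ)
    (hx0 : x ≠ 0) (hx : A *ᵥ x + B *ᵥ y = μ • x) (hy : Bᵀ *ᵥ x = μ • y) : minEig hA ≤ μ := by
  have hp : 0 < x ⬝ᵥ x := dotProduct_self_star_pos_iff.mpr hx0
  have hq : 0 ≤ y ⬝ᵥ y := dotProduct_self_star_nonneg y
  have hAx := hA.minEig_mul_le_dotProduct_mulVec x
  rw [dotProduct_mulVec_eq_of_saddlePoint hx hy] at hAx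
  refine le_of_mul_le_mul_right ?_ hp
  nlinarith

/-- For `μ < 0` the matrix `M = A - μ • 1` is positive semidefinite with `M x = -B y`, so
`‖B y‖² = ‖M x‖² ≤ (λ_max(A) - μ) ⟨x, M x⟩ = (λ_max(A) - μ) (-μ) ‖y‖²`. -/
theorem le_of_saddlePoint_of_neg [DecidableEq m] (hA : A.PosDef) {s : ℝ}
    (hμ : μ < 0) (hx0 : x ≠ 0) (hB : ∀ v, s ^ 2 * (v ⬝ᵥ v) ≤ B *ᵥ v ⬝ᵥ B *ᵥ v)
    (hx : A *ᵥ x + B *ᵥ y = μ • x) (hy : Bᵀ *ᵥ x = μ • y) :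
    μ ≤ (maxEig hA.isHermitian - √(maxEig hA.isHermitian ^ 2 + 4 * s ^ 2)) / 2 := by
  set M := A - μ • (1 : Matrix m m ℝ)
  have hM : M.PosSemidef := by
    simpa [M, sub_eq_add_neg] using hA.posSemidef.add (PosSemidef.one.smul (neg_nonneg.2 hμ.le))
  have hMform : ∀ w, w ⬝ᵥ (M *ᵥ w) = w ⬝ᵥ (A *ᵥ w) - μ * (w ⬝ᵥ w) := fun w => by
    simp [M, sub_mulVec, smul_mulVec]
  have hMx : M *ᵥ x = -(B *ᵥ y) := by
    simp only [M, sub_mulVec, smul_mulVec, one_mulVec, ← hx]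
    abel
  have hp : 0 < x ⬝ᵥ x := dotProduct_self_star_pos_iff.mpr hx0
  have ha := dotProduct_mulVec_eq_of_saddlePoint hx hy
  have hAx : 0 < x ⬝ᵥ (A *ᵥ x) := by simpa using hA.dotProduct_mulVec_pos hx0
  have hlM : 0 < maxEig hA.isHermitian :=
    pos_of_mul_pos_left (hAx.trans_le (hA.isHermitian.dotProduct_mulVec_le_maxEig_mul x)) hp.le
  have hq : 0 < y ⬝ᵥ y := by nlinarith
  have hBy := hM.mulVec_dotProduct_mulVec_le (c := maxEig hA.isHermitian - μ) (by linarith)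
    (fun v => by linarith [hMform v, hA.isHermitian.dotProduct_mulVec_le_maxEig_mul v]) x
  rw [hMform, ha, hMx, neg_dotProduct_neg] at hBy
  refine le_of_le_sq_sub_mul (le_of_mul_le_mul_right ?_ hq) (by linarith)
  nlinarith [hB y]

theorem eigenvalue_mem_of_saddlePoint [DecidableEq m] (hA : A.PosDef)
    (hB : Function.Injective B.mulVec) {s₁ sₙ : ℝ}
    (hB₁ : ∀ v, B *ᵥ v ⬝ᵥ B *ᵥ v ≤ s₁ ^ 2 * (v ⬝ᵥ v))
    (hBₙ : ∀ v, sₙ ^ 2 * (v ⬝ᵥ v) ≤ B *ᵥ v ⬝ᵥ B *ᵥ v) (hxy : x ≠ 0 ∨ y ≠ 0)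
    (hx : A *ᵥ x + B *ᵥ y = μ • x) (hy : Bᵀ *ᵥ x = μ • y) :
    μ ∈ Set.Icc
        ((minEig hA.isHermitian - √(minEig hA.isHermitian ^ 2 + 4 * s₁ ^ 2)) / 2)
        ((maxEig hA.isHermitian - √(maxEig hA.isHermitian ^ 2 + 4 * sₙ ^ 2)) / 2)
      ∪ Set.Icc (minEig hA.isHermitian)
        ((maxEig hA.isHermitian + √(maxEig hA.isHermitian ^ 2 + 4 * s₁ ^ 2)) / 2) := by
  have hx0 := ne_zero_of_saddlePoint hB hxy hx
  rcases (eigenvalue_ne_zero_of_saddlePoint hA hx0 hx hy).lt_or_gt with hμ | hμ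
  · have hAx := mul_le_mul_of_nonpos_left
      (hA.isHermitian.minEig_mul_le_dotProduct_mulVec x) hμ.le
    have hμ₁ := sq_le_of_saddlePoint hx0 hB₁ hAx hx hy
    exact Or.inl ⟨(mem_Icc_of_sq_le_mul_add hμ₁).1, le_of_saddlePoint_of_neg hA hμ hx0 hBₙ hx hy⟩
  · have hAx := mul_le_mul_of_nonneg_left
      (hA.isHermitian.dotProduct_mulVec_le_maxEig_mul x) hμ.le
    have hμ₁ := sq_le_of_saddlePoint hx0 hB₁ hAx hx hy
    exact Or.inr ⟨minEig_le_of_saddlePoint hA.isHermitian hμ hx0 hx hy,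
      (mem_Icc_of_sq_le_mul_add hμ₁).2⟩

end SaddlePoint

theorem Matrix.mulVec_injective_of_rank_eq {m n K : Type*} [Fintype n] [Field K]
    {B : Matrix m n K} (h : B.rank = Fintype.card n) : Function.Injective B.mulVec := by
  rw [mulVec_injective_iff, linearIndependent_iff_card_eq_finrank_span, Set.finrank,
    ← rank_eq_finrank_span_cols, h]

theorem stmt_12 (m n : ℕ)
    (A : Matrix (Fin m) (Fin m) ℝ) (B : Matrix (Fin m) (Fin n) ℝ)
    (hA : A.PosDef)
    (hrank : B.rank = n)
    (hBtB : (Bᵀ * B).IsHermitian)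
    (hW : (fromBlocks A B Bᵀ (0 : Matrix (Fin n) (Fin n) ℝ)).IsHermitian) :
    ∀ i, hW.eigenvalues i ∈
      Set.Icc
        ((minEig hA.isHermitian
          - Real.sqrt (minEig hA.isHermitian ^ 2 + 4 * sigma1 hBtB ^ 2)) / 2)
        ((maxEig hA.isHermitian
          - Real.sqrt (maxEig hA.isHermitian ^ 2 + 4 * sigmaN hBtB ^ 2)) / 2)
      ∪ Set.Icc (minEig hA.isHermitian)
        ((maxEig hA.isHermitian
          + Real.sqrt (maxEig hA.isHermitian ^ 2 + 4 * sigma1 hBtB ^ 2)) / 2) := by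
  intro i
  set z : Fin m ⊕ Fin n → ℝ := ⇑(hW.eigenvectorBasis i)
  have hz : z ∘ Sum.inl ≠ 0 ∨ z ∘ Sum.inr ≠ 0 := by
    rw [← not_and_or]
    rintro ⟨hl, hr⟩
    apply hW.eigenvectorBasis.orthonormal.ne_zero i
    ext (j | j)
    exacts [congrFun hl j, congrFun hr j]
  have hWz : fromBlocks A B Bᵀ 0 *ᵥ z = hW.eigenvalues i • z := hW.mulVec_eigenvectorBasis i
  rw [← Sum.elim_comp_inl_inr z] at hWz
  obtain ⟨hx, hy⟩ : A *ᵥ (z ∘ Sum.inl) + B *ᵥ (z ∘ Sum.inr) = hW.eigenvalues i • z ∘ Sum.inl ∧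
      Bᵀ *ᵥ (z ∘ Sum.inl) = hW.eigenvalues i • z ∘ Sum.inr := by
    simpa [fromBlocks_mulVec, funext_iff, Sum.forall] using hWz
  exact eigenvalue_mem_of_saddlePoint hA
    (mulVec_injective_of_rank_eq (by rw [hrank, Fintype.card_fin]))
    (dotProduct_mulVec_le_sigma1_sq_mul hBtB) (sigmaN_sq_mul_le_dotProduct_mulVec hBtB) hz hx hy
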